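/- With the bilinear law g' as above and unloading ratio β ∈ [0,1), define the phase field γ(r) := g'(r)/(μ̄·(r − β·(r − g'(r)/μ̄))) for r > 0 with r − β(r − g'(r)/μ̄) > 0. Then γ(r) = 1 for 0 < r ≤ r_C, γ is strictly decreasing on [r_C, r_F), 0 ≤ γ(r) ≤ 1 for all r ∈ (0, r_F], and γ(r_F) = 0. -/
import Mathlib


/-- The bilinear cohesive law `g'`. -/
noncomputable def bilinear (mu rC rF : ℝ) (r : ℝ) : ℝ :=
  if r < rC then mu * r
  else if r ≤ rF then mu * rC * (rF - r) / (rF - rC)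
  else 0

/-- The damage phase field defined via the unloading ratio `β`. -/
noncomputable def phaseField (mu rC rF β : ℝ) (r : ℝ) : ℝ :=
  bilinear mu rC rF r /
    (mu * (r - β * (r - bilinear mu rC rF r / mu)))

lemma bilinear_low (mu rC rF r : ℝ) (hmu : 0 < mu) (hCF : rC < rF) (hr : r ≤ rC) :
    bilinear mu rC rF r = mu * r := by
  rcases lt_or_eq_of_le hr with h | h
  · rw [bilinear, if_pos h]
  · subst h
    rw [bilinear, if_neg (lt_irrefl r), if_pos hCF.le, mul_div_assoc,
      div_self (sub_ne_zero.2 (ne_of_gt hCF)), mul_one]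

lemma bilinear_mid (mu rC rF r : ℝ) (h1 : rC ≤ r) (h2 : r ≤ rF) :
    bilinear mu rC rF r = mu * rC * (rF - r) / (rF - rC) := by
  rw [bilinear, if_neg (not_lt.2 h1), if_pos h2]

lemma pf_mid (mu rC rF β r : ℝ) (hmu : 0 < mu) (hrC : 0 < rC) (hCF : rC < rF)
    (hβ0 : 0 ≤ β) (hβ1 : β < 1) (h1 : rC ≤ r) (h2 : r ≤ rF) :
    phaseField mu rC rF β r
      = rC * (rF - r) / ((1 - β) * r * (rF - rC) + β * rC * (rF - r)) := by
  have hd : (0:ℝ) < rF - rC := by linarith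
  have hE : 0 < (1 - β) * r * (rF - rC) + β * rC * (rF - r) := by
    have h3 : 0 < (1 - β) * r * (rF - rC) := by
      apply mul_pos (mul_pos (by linarith) (by linarith)) hd
    have h4 : 0 ≤ β * rC * (rF - r) := by
      apply mul_nonneg (mul_nonneg hβ0 hrC.le) (by linarith)
    linarith
  have hB : mu * (r - β * (r - bilinear mu rC rF r / mu))
      = mu * ((1 - β) * r * (rF - rC) + β * rC * (rF - r)) / (rF - rC) := by
    rw [bilinear_mid mu rC rF r h1 h2]
    field_simp
    ring
  rw [phaseField, hB, bilinear_mid mu rC rF r h1 h2]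
  rw [div_eq_div_iff (by positivity) hE.ne']
  field_simp

theorem stmt_2 (mu rC rF β : ℝ) (hmu : 0 < mu) (hrC : 0 < rC) (hCF : rC < rF)
    (hβ : β ∈ Set.Ico (0:ℝ) 1) :
    (∀ r ∈ Set.Ioc (0:ℝ) rC, phaseField mu rC rF β r = 1) ∧
    StrictAntiOn (phaseField mu rC rF β) (Set.Ico rC rF) ∧
    (∀ r ∈ Set.Ioc (0:ℝ) rF,
      0 ≤ phaseField mu rC rF β r ∧ phaseField mu rC rF β r ≤ 1) ∧
    phaseField mu rC rF β rF = 0 := by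
  obtain ⟨hβ0, hβ1⟩ := hβ
  have hd : (0:ℝ) < rF - rC := by linarith
  have hlow : ∀ r ∈ Set.Ioc (0:ℝ) rC, phaseField mu rC rF β r = 1 := by
    intro r ⟨hr0, hr1⟩
    rw [phaseField, bilinear_low mu rC rF r hmu hCF hr1]
    have h1 : mu * r / mu = r := by field_simp
    rw [h1, sub_self, mul_zero, sub_zero]
    exact div_self (by positivity)
  have hE : ∀ r, rC ≤ r → r ≤ rF →
      0 < (1 - β) * r * (rF - rC) + β * rC * (rF - r) := by
    intro r h1 h2
    have h3 : 0 < (1 - β) * r * (rF - rC) :=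
      mul_pos (mul_pos (by linarith) (by linarith)) hd
    have h4 : 0 ≤ β * rC * (rF - r) :=
      mul_nonneg (mul_nonneg hβ0 hrC.le) (by linarith)
    linarith
  refine ⟨hlow, ?_, ?_, ?_⟩
  · intro r1 ⟨h1a, h1b⟩ r2 ⟨h2a, h2b⟩ h12
    rw [pf_mid mu rC rF β r1 hmu hrC hCF hβ0 hβ1 h1a h1b.le,
        pf_mid mu rC rF β r2 hmu hrC hCF hβ0 hβ1 h2a h2b.le]
    have hE1 := hE r1 h1a h1b.le
    have hE2 := hE r2 h2a h2b.le
    rw [div_lt_div_iff₀ hE2 hE1]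
    have key : rC * (rF - r1) * ((1 - β) * r2 * (rF - rC) + β * rC * (rF - r2))
        - rC * (rF - r2) * ((1 - β) * r1 * (rF - rC) + β * rC * (rF - r1))
        = rC * (1 - β) * (rF - rC) * rF * (r2 - r1) := by ring
    have hpos : 0 < rC * (1 - β) * (rF - rC) * rF * (r2 - r1) := by
      apply mul_pos (mul_pos (mul_pos (mul_pos hrC (by linarith)) hd) (by linarith))
      linarith
    linarith
  · intro r ⟨hr0, hrF⟩
    rcases le_or_gt r rC with h | h
    · rw [hlow r ⟨hr0, h⟩]; norm_num
    · rw [pf_mid mu rC rF β r hmu hrC hCF hβ0 hβ1 h.le hrF]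
      have hEr := hE r h.le hrF
      constructor
      · apply div_nonneg _ hEr.le
        exact mul_nonneg hrC.le (by linarith)
      · rw [div_le_one hEr]
        nlinarith [mul_nonneg (sub_nonneg.2 hβ1.le) (mul_nonneg (sub_nonneg.2 h.le) (by linarith : (0:ℝ) ≤ rF))]
  · rw [pf_mid mu rC rF β rF hmu hrC hCF hβ0 hβ1 hCF.le le_rfl]
    simp
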